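/- arXiv:1310.2362 — 2 statements merged into one kernel-verified Lean document; each statement's English description precedes it below -/
import Mathlib

section
/- Let F₁ ∈ C^∞(ℝ^{2n}, ℝ^n), F₂ ∈ C^∞(ℝ^n, ℝ^n), let J = [−1,1] and let k : J → ℝ^n be smooth and bounded. Fix x₀, ẋ₀ ∈ ℝ^n and b, c > 0, and let (δ_ε)_{ε∈(0,1]} be a strict delta net with L¹-bound C > 0. Set I₁ = {x ∈ ℝ^n : |x − x₀| ≤ b}, I₂ = {z ∈ ℝ^n : |z − ẋ₀| ≤ c + C·sup_{I₁}|F₂|}, I₃ = I₁ × I₂, and α = min(1, b/(|ẋ₀| + sup_{I₃}|F₁| + C·sup_{I₁}|F₂| + sup_J |k|), c/(sup_{I₃}|F₁| + sup_J |k|)). Then for every ε ∈ (0,1] the solution x_ε on J_ε = [−ε, α − ε] of the initial value problem ẍ = F₁(x, ẋ) + F₂(x)·δ_ε + k, x(−ε) = x₀, ẋ(−ε) = ẋ₀ satisfies |x_ε(t) − x₀| ≤ b and |ẋ_ε(t) − ẋ₀| ≤ c + C·sup_{I₁}|F₂| for all t ∈ J_ε; in particular the families (x_ε) and (ẋ_ε)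 are bounded on J_ε uniformly in ε. -/
open Set MeasureTheory Filter

noncomputable section

/-- A strict delta net `(δ_ε)_{ε ∈ (0,1]}` with `L¹`-bound `C`:
smooth functions supported in `(-ε, ε)`, with integrals tending to `1`
and `L¹`-norms uniformly bounded by `C`. -/
def StrictDeltaNet (δ : ℝ → ℝ → ℝ) (C : ℝ) : Prop :=
  (∀ ε ∈ Set.Ioc (0:ℝ) 1, ContDiff ℝ (⊤ : ℕ∞) (δ ε)) ∧
  (∀ ε ∈ Set.Ioc (0:ℝ) 1, Function.support (δ ε) ⊆ Set.Ioo (-ε) ε) ∧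
  Filter.Tendsto (fun ε => ∫ x, δ ε x) (nhdsWithin 0 (Set.Ioi 0)) (nhds 1) ∧
  0 < C ∧ ∀ ε ∈ Set.Ioc (0:ℝ) 1, (∫ x, |δ ε x|) ≤ C

/-- A strict delta net (with some `L¹`-bound). -/
def IsStrictDeltaNet (δ : ℝ → ℝ → ℝ) : Prop := ∃ C : ℝ, StrictDeltaNet δ C

set_option maxHeartbeats 1000000

/-- Any solution of the regularized IVP on `J_ε = [-ε, α-ε]` stays in the sets `I₁`
(positions) and `I₂` (velocities); in particular solutions and their derivatives
are bounded on `J_ε` uniformly in `ε`. -/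
theorem bounds_regularized_ivp {n : ℕ}
    (F₁ : EuclideanSpace ℝ (Fin n) × EuclideanSpace ℝ (Fin n) → EuclideanSpace ℝ (Fin n))
    (F₂ : EuclideanSpace ℝ (Fin n) → EuclideanSpace ℝ (Fin n))
    (hF₁ : ContDiff ℝ (⊤ : ℕ∞) F₁) (hF₂ : ContDiff ℝ (⊤ : ℕ∞) F₂)
    (k : ℝ → EuclideanSpace ℝ (Fin n))
    (hk : ContDiffOn ℝ (⊤ : ℕ∞) k (Set.Icc (-1 : ℝ) 1))
    (hkb : ∃ B : ℝ, ∀ t ∈ Set.Icc (-1 : ℝ) 1, ‖k t‖ ≤ B)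
    (x₀ dx₀ : EuclideanSpace ℝ (Fin n)) (b c : ℝ) (hb : 0 < b) (hc : 0 < c)
    (δ : ℝ → ℝ → ℝ) (C : ℝ) (hC : 0 < C) (hδ : StrictDeltaNet δ C)
    (I₁ : Set (EuclideanSpace ℝ (Fin n))) (hI₁ : I₁ = {x | ‖x - x₀‖ ≤ b})
    (M₂ : ℝ) (hM₂ : M₂ = sSup ((fun x => ‖F₂ x‖) '' I₁))
    (I₂ : Set (EuclideanSpace ℝ (Fin n))) (hI₂ : I₂ = {z | ‖z - dx₀‖ ≤ c + C * M₂})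
    (M₁ : ℝ) (hM₁ : M₁ = sSup ((fun p => ‖F₁ p‖) '' (I₁ ×ˢ I₂)))
    (Mk : ℝ) (hMk : Mk = sSup ((fun t => ‖k t‖) '' Set.Icc (-1 : ℝ) 1))
    (α : ℝ) (hα : α = min 1 (min (b / (‖dx₀‖ + M₁ + C * M₂ + Mk)) (c / (M₁ + Mk))))
    (ε : ℝ) (hε : ε ∈ Set.Ioc (0:ℝ) 1)
    (x : ℝ → EuclideanSpace ℝ (Fin n))
    (hx : ContDiff ℝ (⊤ : ℕ∞) x)
    (hode : ∀ t ∈ Set.Icc (-ε) (α - ε),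
      deriv (deriv x) t = F₁ (x t, deriv x t) + δ ε t • F₂ (x t) + k t)
    (hx0 : x (-ε) = x₀) (hdx0 : deriv x (-ε) = dx₀) :
    ∀ t ∈ Set.Icc (-ε) (α - ε),
      ‖x t - x₀‖ ≤ b ∧ ‖deriv x t - dx₀‖ ≤ c + C * M₂ := by
  -- basic continuity/differentiability facts
  have hx' : ContDiff ℝ ((⊤ : ℕ∞) : WithTop ℕ∞) x := hx.of_le (by simp)
  have hxc : Continuous x := hx'.continuous
  have hxd : Differentiable ℝ x := (contDiff_infty_iff_deriv.mp hx').1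
  have hv : ContDiff ℝ ((⊤ : ℕ∞) : WithTop ℕ∞) (deriv x) := (contDiff_infty_iff_deriv.mp hx').2
  have hvc : Continuous (deriv x) := hv.continuous
  have hvd : Differentiable ℝ (deriv x) := (contDiff_infty_iff_deriv.mp hv).1
  have hac : Continuous (deriv (deriv x)) := (contDiff_infty_iff_deriv.mp hv).2.continuous
  obtain ⟨hδs, hδsupp, hδtend, -, hδL1⟩ := hδ
  have hε0 : 0 < ε := hε.1
  have hε1 : ε ≤ 1 := hε.2
  -- the sets are closed balls
  have hI₁' : I₁ = Metric.closedBall x₀ b := by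
    rw [hI₁]; ext y; simp [Metric.mem_closedBall, dist_eq_norm]
  have hI₂' : I₂ = Metric.closedBall dx₀ (c + C * M₂) := by
    rw [hI₂]; ext y; simp [Metric.mem_closedBall, dist_eq_norm]
  have hI₁comp : IsCompact I₁ := hI₁' ▸ isCompact_closedBall x₀ b
  have hM₂le : ∀ y ∈ I₁, ‖F₂ y‖ ≤ M₂ := by
    intro y hy
    rw [hM₂]
    exact le_csSup (hI₁comp.image hF₂.continuous.norm).bddAbove ⟨y, hy, rfl⟩
  have hx₀I₁ : x₀ ∈ I₁ := by rw [hI₁]; simpa using hb.le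
  have hM₂0 : 0 ≤ M₂ := (norm_nonneg _).trans (hM₂le x₀ hx₀I₁)
  have hI₂comp : IsCompact I₂ := hI₂' ▸ isCompact_closedBall dx₀ (c + C * M₂)
  have hM₁le : ∀ p ∈ I₁ ×ˢ I₂, ‖F₁ p‖ ≤ M₁ := by
    intro p hp
    rw [hM₁]
    exact le_csSup ((hI₁comp.prod hI₂comp).image hF₁.continuous.norm).bddAbove ⟨p, hp, rfl⟩
  have hdx₀I₂ : dx₀ ∈ I₂ := by
    rw [hI₂]
    simp only [Set.mem_setOf_eq, sub_self, norm_zero]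
    positivity
  have hM₁0 : 0 ≤ M₁ := (norm_nonneg _).trans (hM₁le (x₀, dx₀) ⟨hx₀I₁, hdx₀I₂⟩)
  have hMkle : ∀ t ∈ Set.Icc (-1:ℝ) 1, ‖k t‖ ≤ Mk := by
    obtain ⟨B, hB⟩ := hkb
    intro t ht
    rw [hMk]
    refine le_csSup ⟨B, ?_⟩ ⟨t, ht, rfl⟩
    rintro _ ⟨u, hu, rfl⟩
    exact hB u hu
  have hMk0 : 0 ≤ Mk := (norm_nonneg _).trans (hMkle 0 (by norm_num))
  -- integrability of the delta function
  have hδct : Continuous (δ ε) := (hδs ε hε).continuous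
  have hδcs : HasCompactSupport (δ ε) := by
    apply HasCompactSupport.intro (isCompact_Icc (a := -ε) (b := ε))
    intro u hu
    by_contra h
    exact hu (Ioo_subset_Icc_self (hδsupp ε hε h))
  have hδint : Integrable (δ ε) := hδct.integrable_of_hasCompactSupport hδcs
  have hδIcc : ∀ t, -ε ≤ t → (∫ u in (-ε)..t, |δ ε u|) ≤ C := by
    intro t ht
    rw [intervalIntegral.integral_of_le ht]
    calc (∫ u in Ioc (-ε) t, |δ ε u|) ≤ ∫ u, |δ ε u| :=
          setIntegral_le_integral hδint.abs (Eventually.of_forall fun u => abs_nonneg _)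
      _ ≤ C := hδL1 ε hε
  by_cases hα0 : 0 < α
  swap
  · -- degenerate case: the interval is (at most) a single point
    push_neg at hα0
    intro t ht
    have htε : t = -ε := le_antisymm (ht.2.trans (by linarith)) ht.1
    subst htε
    simp only [hx0, hdx0, sub_self, norm_zero]
    exact ⟨hb.le, by linarith [mul_nonneg hC.le hM₂0]⟩
  -- positivity of the denominators
  have hα1 : α ≤ 1 := hα ▸ min_le_left _ _
  have hαb : α ≤ b / (‖dx₀‖ + M₁ + C * M₂ + Mk) :=
    hα ▸ (min_le_right _ _).trans (min_le_left _ _)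
  have hαc : α ≤ c / (M₁ + Mk) := hα ▸ (min_le_right _ _).trans (min_le_right _ _)
  have hDnn : 0 ≤ ‖dx₀‖ + M₁ + C * M₂ + Mk := by positivity
  have hD0 : 0 < ‖dx₀‖ + M₁ + C * M₂ + Mk := by
    rcases hDnn.lt_or_eq with h | h
    · exact h
    · rw [← h, div_zero] at hαb; linarith
  have hMks0 : 0 < M₁ + Mk := by
    rcases (by positivity : (0:ℝ) ≤ M₁ + Mk).lt_or_eq with h | h
    · exact h
    · rw [← h, div_zero] at hαc; linarith
  have hαD : α * (‖dx₀‖ + M₁ + C * M₂ + Mk) ≤ b := (le_div_iff₀ hD0).mp hαb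
  have hαMk : α * (M₁ + Mk) ≤ c := (le_div_iff₀ hMks0).mp hαc
  -- the bootstrap set
  set s : Set ℝ :=
    {t | ∀ u ∈ Icc (-ε) t, ‖x u - x₀‖ ≤ b ∧ ‖deriv x u - dx₀‖ ≤ c + C * M₂} with hsdef
  -- velocity estimate
  have hestv : ∀ t ∈ Icc (-ε) (α - ε), t ∈ s →
      ‖deriv x t - dx₀‖ ≤ (t + ε) * (M₁ + Mk) + C * M₂ := by
    intro t ht hbd
    have hat : -ε ≤ t := ht.1
    have ht1 : t ≤ 1 := ht.2.trans (by linarith)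
    have hIccsub : Icc (-ε) t ⊆ Icc (-1:ℝ) 1 := Icc_subset_Icc (by linarith) ht1
    have huIcc : uIcc (-ε) t = Icc (-ε) t := uIcc_of_le hat
    have hint₁ : IntervalIntegrable (fun u => F₁ (x u, deriv x u)) volume (-ε) t :=
      (hF₁.continuous.comp (hxc.prodMk hvc)).intervalIntegrable _ _
    have hint₂ : IntervalIntegrable (fun u => δ ε u • F₂ (x u)) volume (-ε) t :=
      (hδct.smul (hF₂.continuous.comp hxc)).intervalIntegrable _ _
    have hint₃ : IntervalIntegrable k volume (-ε) t :=
      (hk.continuousOn.mono (huIcc ▸ hIccsub)).intervalIntegrable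
    have hftc : deriv x t - dx₀ = ∫ u in (-ε)..t, deriv (deriv x) u := by
      rw [intervalIntegral.integral_deriv_eq_sub (fun u _ => hvd u)
        (hac.intervalIntegrable _ _), hdx0]
    have hcongr : (∫ u in (-ε)..t, deriv (deriv x) u)
        = (∫ u in (-ε)..t, F₁ (x u, deriv x u)) + (∫ u in (-ε)..t, δ ε u • F₂ (x u))
          + ∫ u in (-ε)..t, k u := by
      rw [← intervalIntegral.integral_add hint₁ hint₂,
        ← intervalIntegral.integral_add (hint₁.add hint₂) hint₃]
      apply intervalIntegral.integral_congr
      intro u hu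
      rw [huIcc] at hu
      exact hode u ⟨hu.1, hu.2.trans ht.2⟩
    have habs : |t - (-ε)| = t + ε := by rw [abs_of_nonneg (by linarith)]; ring
    have h1 : ‖∫ u in (-ε)..t, F₁ (x u, deriv x u)‖ ≤ M₁ * (t + ε) := by
      rw [← habs]
      apply intervalIntegral.norm_integral_le_of_norm_le_const
      intro u hu
      rw [uIoc_of_le hat] at hu
      have hu' : u ∈ Icc (-ε) t := Ioc_subset_Icc_self hu
      exact hM₁le (x u, deriv x u)
        ⟨by rw [hI₁]; exact (hbd u hu').1, by rw [hI₂]; exact (hbd u hu').2⟩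
    have h3 : ‖∫ u in (-ε)..t, k u‖ ≤ Mk * (t + ε) := by
      rw [← habs]
      apply intervalIntegral.norm_integral_le_of_norm_le_const
      intro u hu
      rw [uIoc_of_le hat] at hu
      exact hMkle u (hIccsub (Ioc_subset_Icc_self hu))
    have h2 : ‖∫ u in (-ε)..t, δ ε u • F₂ (x u)‖ ≤ C * M₂ := by
      calc ‖∫ u in (-ε)..t, δ ε u • F₂ (x u)‖
          ≤ ∫ u in (-ε)..t, ‖δ ε u • F₂ (x u)‖ :=
            intervalIntegral.norm_integral_le_integral_norm hat
        _ ≤ ∫ u in (-ε)..t, |δ ε u| * M₂ := by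
            apply intervalIntegral.integral_mono_on hat hint₂.norm
              ((hδct.abs.mul continuous_const).intervalIntegrable _ _)
            intro u hu
            rw [norm_smul, Real.norm_eq_abs]
            exact mul_le_mul_of_nonneg_left
              (hM₂le _ (by rw [hI₁]; exact (hbd u hu).1)) (abs_nonneg _)
        _ = (∫ u in (-ε)..t, |δ ε u|) * M₂ := intervalIntegral.integral_mul_const _ _
        _ ≤ C * M₂ := mul_le_mul_of_nonneg_right (hδIcc t hat) hM₂0
    calc ‖deriv x t - dx₀‖
        = ‖(∫ u in (-ε)..t, F₁ (x u, deriv x u)) + (∫ u in (-ε)..t, δ ε u • F₂ (x u))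
            + ∫ u in (-ε)..t, k u‖ := by rw [hftc, hcongr]
      _ ≤ ‖∫ u in (-ε)..t, F₁ (x u, deriv x u)‖ + ‖∫ u in (-ε)..t, δ ε u • F₂ (x u)‖
            + ‖∫ u in (-ε)..t, k u‖ := norm_add₃_le
      _ ≤ M₁ * (t + ε) + C * M₂ + Mk * (t + ε) := by linarith
      _ = (t + ε) * (M₁ + Mk) + C * M₂ := by ring
  -- position estimate
  have hestx : ∀ t ∈ Icc (-ε) (α - ε), t ∈ s →
      ‖x t - x₀‖ ≤ (t + ε) * (‖dx₀‖ + M₁ + C * M₂ + Mk) := by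
    intro t ht hbd
    have hat : -ε ≤ t := ht.1
    have habs : |t - (-ε)| = t + ε := by rw [abs_of_nonneg (by linarith)]; ring
    have hftc : x t - x₀ = ∫ u in (-ε)..t, deriv x u := by
      rw [intervalIntegral.integral_deriv_eq_sub (fun u _ => hxd u)
        (hvc.intervalIntegrable _ _), hx0]
    rw [hftc]
    have key : ‖∫ u in (-ε)..t, deriv x u‖
        ≤ (‖dx₀‖ + M₁ + C * M₂ + Mk) * |t - (-ε)| := by
      apply intervalIntegral.norm_integral_le_of_norm_le_const
      intro u hu
      rw [uIoc_of_le hat] at hu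
      have hu' : u ∈ Icc (-ε) t := Ioc_subset_Icc_self hu
      have huIcc : u ∈ Icc (-ε) (α - ε) := ⟨hu'.1, hu'.2.trans ht.2⟩
      have hus : u ∈ s := fun w hw => hbd w ⟨hw.1, hw.2.trans hu'.2⟩
      have hvu := hestv u huIcc hus
      have huε1 : u + ε ≤ 1 := by
        have := huIcc.2
        linarith
      have hprod : (u + ε) * (M₁ + Mk) ≤ M₁ + Mk := by
        nlinarith [hMks0.le]
      calc ‖deriv x u‖ = ‖dx₀ + (deriv x u - dx₀)‖ := by rw [add_sub_cancel]
        _ ≤ ‖dx₀‖ + ‖deriv x u - dx₀‖ := norm_add_le _ _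
        _ ≤ ‖dx₀‖ + M₁ + C * M₂ + Mk := by linarith
    rw [habs] at key
    linarith [key, mul_comm (‖dx₀‖ + M₁ + C * M₂ + Mk) (t + ε)]
  -- closedness of the pointwise condition
  have hBclosed : IsClosed {u : ℝ | ‖x u - x₀‖ ≤ b ∧ ‖deriv x u - dx₀‖ ≤ c + C * M₂} := by
    rw [setOf_and]
    exact (isClosed_le ((hxc.sub continuous_const).norm) continuous_const).inter
      (isClosed_le ((hvc.sub continuous_const).norm) continuous_const)
  have hclosed : IsClosed (s ∩ Icc (-ε) (α - ε)) := by
    apply IsSeqClosed.isClosed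
    intro ts t hts hlim
    have htIcc : t ∈ Icc (-ε) (α - ε) :=
      isClosed_Icc.isSeqClosed (fun m => (hts m).2) hlim
    refine ⟨fun u hu => ?_, htIcc⟩
    by_cases hcase : ∃ m, u ≤ ts m
    · obtain ⟨m, hm⟩ := hcase
      exact (hts m).1 u ⟨hu.1, hm⟩
    · push_neg at hcase
      have htu : t ≤ u := le_of_tendsto' hlim fun m => (hcase m).le
      have hut : u = t := le_antisymm hu.2 htu
      subst hut
      exact hBclosed.isSeqClosed
        (fun m => (hts m).1 (ts m) ⟨(hts m).2.1, le_refl _⟩) hlim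
  have hmem0 : -ε ∈ s := by
    intro u hu
    have : u = -ε := le_antisymm hu.2 hu.1
    subst this
    simp only [hx0, hdx0, sub_self, norm_zero]
    exact ⟨hb.le, by linarith [mul_nonneg hC.le hM₂0]⟩
  have hsub : Icc (-ε) (α - ε) ⊆ s := by
    apply hclosed.Icc_subset_of_forall_exists_gt hmem0
    intro T hT y hy
    obtain ⟨hTs, hTIco⟩ := hT
    have hTIcc : T ∈ Icc (-ε) (α - ε) := ⟨hTIco.1, hTIco.2.le⟩
    have hTα : T + ε < α := by have := hTIco.2; linarith
    have hvT : ‖deriv x T - dx₀‖ < c + C * M₂ := by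
      have h := hestv T hTIcc hTs
      nlinarith [hαMk]
    have hxT : ‖x T - x₀‖ < b := by
      have h := hestx T hTIcc hTs
      nlinarith [hαD]
    have hUopen : IsOpen {u : ℝ | ‖x u - x₀‖ < b ∧ ‖deriv x u - dx₀‖ < c + C * M₂} := by
      rw [setOf_and]
      exact (isOpen_lt ((hxc.sub continuous_const).norm) continuous_const).inter
        (isOpen_lt ((hvc.sub continuous_const).norm) continuous_const)
    obtain ⟨η, hη0, hball⟩ := Metric.isOpen_iff.mp hUopen T ⟨hxT, hvT⟩
    refine ⟨min y (T + η / 2), ?_, lt_min hy (by linarith), min_le_left _ _⟩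
    intro u hu
    by_cases huT : u ≤ T
    · exact hTs u ⟨hu.1, huT⟩
    · push_neg at huT
      have hu2 : u ≤ T + η / 2 := hu.2.trans (min_le_right _ _)
      have : u ∈ Metric.ball T η := by
        rw [Metric.mem_ball, Real.dist_eq, abs_of_nonneg (by linarith)]
        linarith
      have := hball this
      exact ⟨this.1.le, this.2.le⟩
  intro t ht
  exact hsub ht t ⟨ht.1, le_refl t⟩
end
end

section
/- Let −∞ < t₀ < T < ∞, let a : [t₀, T] → [0, ∞) be continuous, let A ≥ 0, and let ψ : [t₀, T] → [0, ∞) be continuous and satisfy, for all u ∈ [t₀, T], ψ(u) ≤ A + ∫_{t₀}^u a(s) ψ(s) ds + ∫_{t₀}^u ∫_{t₀}^s a(r) ψ(r) dr ds. Then for all u ∈ [t₀, T], ψ(u) ≤ A · exp( ∫_{t₀}^u a(s) ds + ∫_{t₀}^u ∫_{t₀}^s a(r) dr ds ). -/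
/-!
Put `Φ(u) = A + ∫_{t₀}^u aψ + ∫_{t₀}^u ∫_{t₀}^s aψ`, so that `ψ ≤ Φ` and `Φ` is nondecreasing
since `aψ ≥ 0`. Then `Φ' = aψ + ∫_{t₀}^u aψ ≤ (a + ∫_{t₀}^u a) Φ = B' Φ`, where `B` is the
exponent of the claimed bound, so `Φ e^{-B}` is nonincreasing and `ψ ≤ Φ ≤ Φ(t₀) e^{B} = A e^{B}`.
-/

open Set MeasureTheory Filter intervalIntegral Real

theorem le_mul_exp_sub_of_hasDerivWithinAt_le_mul {f f' b b' : ℝ → ℝ} {t₀ T u : ℝ}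
    (hf : ∀ x ∈ Icc t₀ T, HasDerivWithinAt f (f' x) (Icc t₀ T) x)
    (hb : ∀ x ∈ Icc t₀ T, HasDerivWithinAt b (b' x) (Icc t₀ T) x)
    (hle : ∀ x ∈ Ioo t₀ T, f' x ≤ b' x * f x) (hu : u ∈ Icc t₀ T) :
    f u ≤ f t₀ * exp (b u - b t₀) := by
  have hanti : AntitoneOn (fun x => f x * exp (-b x)) (Icc t₀ T) := by
    refine antitoneOn_of_hasDerivWithinAt_nonpos (convex_Icc t₀ T)
      (f' := fun x => (f' x - b' x * f x) * exp (-b x))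
      (fun x hx => ((hf x hx).mul (hb x hx).neg.exp).continuousWithinAt) (fun x hx => ?_)
      (fun x hx => ?_)
    · rw [interior_Icc] at hx ⊢
      have hxI := Ioo_subset_Icc_self hx
      refine (((hf x hxI).mul (hb x hxI).neg.exp).congr_deriv ?_).mono Ioo_subset_Icc_self
      simp only [Pi.neg_apply]
      ring
    · rw [interior_Icc] at hx
      exact mul_nonpos_of_nonpos_of_nonneg (sub_nonpos.2 (hle x hx)) (exp_pos _).le
  calc f u = f u * exp (-b u) * exp (b u) := by rw [mul_assoc, ← exp_add]; simp
    _ ≤ f t₀ * exp (-b t₀) * exp (b u) :=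
      mul_le_mul_of_nonneg_right (hanti (left_mem_Icc.2 (hu.1.trans hu.2)) hu hu.1) (exp_pos _).le
    _ = f t₀ * exp (b u - b t₀) := by rw [mul_assoc, ← exp_add, neg_add_eq_sub]

theorem hasDerivWithinAt_primitive_of_continuousOn {f : ℝ → ℝ} {t₀ T x : ℝ}
    (hf : ContinuousOn f (Icc t₀ T)) (hx : x ∈ Icc t₀ T) :
    HasDerivWithinAt (fun u => ∫ s in t₀..u, f s) (f x) (Icc t₀ T) x := by
  have : Fact (x ∈ Icc t₀ T) := ⟨hx⟩
  exact integral_hasDerivWithinAt_right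
    ((hf.mono (uIcc_subset_Icc (left_mem_Icc.2 (hx.1.trans hx.2)) hx)).intervalIntegrable)
    (hf.stronglyMeasurableAtFilter_nhdsWithin measurableSet_Icc x) (hf x hx)

noncomputable def bykovIntegral (t₀ : ℝ) (f : ℝ → ℝ) (u : ℝ) : ℝ :=
  (∫ s in t₀..u, f s) + ∫ s in t₀..u, ∫ r in t₀..s, f r

section bykovIntegral

variable {f : ℝ → ℝ} {t₀ T x : ℝ}

@[simp]
theorem bykovIntegral_self : bykovIntegral t₀ f t₀ = 0 := by
  simp [bykovIntegral]

theorem hasDerivWithinAt_bykovIntegral (hf : ContinuousOn f (Icc t₀ T)) (hx : x ∈ Icc t₀ T) :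
    HasDerivWithinAt (bykovIntegral t₀ f) (f x + ∫ r in t₀..x, f r) (Icc t₀ T) x :=
  (hasDerivWithinAt_primitive_of_continuousOn hf hx).add
    (hasDerivWithinAt_primitive_of_continuousOn
      (fun _ hy => (hasDerivWithinAt_primitive_of_continuousOn hf hy).continuousWithinAt) hx)

theorem monotoneOn_bykovIntegral (hf : ContinuousOn f (Icc t₀ T))
    (hf0 : ∀ x ∈ Icc t₀ T, 0 ≤ f x) : MonotoneOn (bykovIntegral t₀ f) (Icc t₀ T) := by
  refine monotoneOn_of_hasDerivWithinAt_nonneg (convex_Icc t₀ T)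
    (f' := fun x => f x + ∫ r in t₀..x, f r)
    (fun x hx => (hasDerivWithinAt_bykovIntegral hf hx).continuousWithinAt)
    (fun x hx => ?_) (fun x hx => ?_)
  · rw [interior_Icc] at hx ⊢
    exact (hasDerivWithinAt_bykovIntegral hf (Ioo_subset_Icc_self hx)).mono Ioo_subset_Icc_self
  · rw [interior_Icc] at hx
    exact add_nonneg (hf0 x (Ioo_subset_Icc_self hx))
      (integral_nonneg hx.1.le fun r hr => hf0 r ⟨hr.1, hr.2.trans hx.2.le⟩)

end bykovIntegral

theorem integral_mul_le_integral_mul_of_le {a g : ℝ → ℝ} {t₀ x c : ℝ} (hx : t₀ ≤ x)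
    (ha : IntervalIntegrable a volume t₀ x)
    (hag : IntervalIntegrable (fun r => a r * g r) volume t₀ x)
    (ha0 : ∀ r ∈ Icc t₀ x, 0 ≤ a r) (hg : ∀ r ∈ Icc t₀ x, g r ≤ c) :
    ∫ r in t₀..x, a r * g r ≤ (∫ r in t₀..x, a r) * c := by
  rw [← intervalIntegral.integral_mul_const]
  exact integral_mono_on hx hag (ha.mul_const c) fun r hr =>
    mul_le_mul_of_nonneg_left (hg r hr) (ha0 r hr)

theorem bykov_gronwall_general (t₀ T A : ℝ)
    (a ψ : ℝ → ℝ)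
    (ha : ContinuousOn a (Set.Icc t₀ T)) (ha0 : ∀ u ∈ Set.Icc t₀ T, 0 ≤ a u)
    (hψ : ContinuousOn ψ (Set.Icc t₀ T)) (hψ0 : ∀ u ∈ Set.Icc t₀ T, 0 ≤ ψ u)
    (hineq : ∀ u ∈ Set.Icc t₀ T,
      ψ u ≤ A + (∫ s in t₀..u, a s * ψ s) + ∫ s in t₀..u, ∫ r in t₀..s, a r * ψ r) :
    ∀ u ∈ Set.Icc t₀ T,
      ψ u ≤ A * Real.exp ((∫ s in t₀..u, a s) + ∫ s in t₀..u, ∫ r in t₀..s, a r) := by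
  intro u hu
  have haψ : ContinuousOn (fun s => a s * ψ s) (Icc t₀ T) := ha.mul hψ
  set Φ := fun x => A + bykovIntegral t₀ (fun s => a s * ψ s) x
  have hψΦ : ∀ x ∈ Icc t₀ T, ψ x ≤ Φ x := fun x hx => (hineq x hx).trans_eq (add_assoc _ _ _)
  have hΦ : MonotoneOn Φ (Icc t₀ T) := fun x hx y hy hxy =>
    add_le_add_right (monotoneOn_bykovIntegral haψ
      (fun s hs => mul_nonneg (ha0 s hs) (hψ0 s hs)) hx hy hxy) A
  have hderiv_le : ∀ x ∈ Ioo t₀ T,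
      a x * ψ x + ∫ r in t₀..x, a r * ψ r ≤ (a x + ∫ r in t₀..x, a r) * Φ x := by
    intro x hx
    have hxI := Ioo_subset_Icc_self hx
    have hsub : Icc t₀ x ⊆ Icc t₀ T := Icc_subset_Icc_right hx.2.le
    have hlocal := mul_le_mul_of_nonneg_left (hψΦ x hxI) (ha0 x hxI)
    have hintegral := integral_mul_le_integral_mul_of_le hx.1.le
      ((ha.mono hsub).intervalIntegrable_of_Icc hx.1.le)
      ((haψ.mono hsub).intervalIntegrable_of_Icc hx.1.le) (fun r hr => ha0 r (hsub hr))
      (fun r hr => (hψΦ r (hsub hr)).trans (hΦ (hsub hr) hxI hr.2))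
    linarith
  have hgronwall := le_mul_exp_sub_of_hasDerivWithinAt_le_mul
    (fun x hx => (hasDerivWithinAt_bykovIntegral haψ hx).const_add A)
    (fun x hx => hasDerivWithinAt_bykovIntegral ha hx) hderiv_le hu
  simpa [Φ, bykovIntegral] using (hψΦ u hu).trans hgronwall

/-- Bykov's generalization of Gronwall's inequality: if a continuous nonnegative `ψ`
satisfies `ψ(u) ≤ A + ∫_{t₀}^u a ψ + ∫_{t₀}^u ∫_{t₀}^s a ψ`, then
`ψ(u) ≤ A exp(∫_{t₀}^u a + ∫_{t₀}^u ∫_{t₀}^s a)`. -/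
theorem bykov_gronwall (t₀ T A : ℝ) (ht : t₀ < T) (hA : 0 ≤ A)
    (a ψ : ℝ → ℝ)
    (ha : ContinuousOn a (Set.Icc t₀ T)) (ha0 : ∀ u ∈ Set.Icc t₀ T, 0 ≤ a u)
    (hψ : ContinuousOn ψ (Set.Icc t₀ T)) (hψ0 : ∀ u ∈ Set.Icc t₀ T, 0 ≤ ψ u)
    (hineq : ∀ u ∈ Set.Icc t₀ T,
      ψ u ≤ A + (∫ s in t₀..u, a s * ψ s) + ∫ s in t₀..u, ∫ r in t₀..s, a r * ψ r) :
    ∀ u ∈ Set.Icc t₀ T,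
      ψ u ≤ A * Real.exp ((∫ s in t₀..u, a s) + ∫ s in t₀..u, ∫ r in t₀..s, a r) :=
  bykov_gronwall_general t₀ T A a ψ ha ha0 hψ hψ0 hineq
end
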